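/- arXiv:1608.00190 — 4 statements merged into one kernel-verified Lean document; each statement's English description precedes it below -/
import Mathlib

section
/- Let H be a Hilbert space and let E = K(H) ⊕ K(H) be the Hilbert K(H)-module with inner product ⟨(T₁, S₁), (T₂, S₂)⟩ = T₁*T₂ + S₁*S₂. Let φ = id : K(H) → B(H) be the inclusion, and let Φ : K(H) ⊕ 0 → B(H) be defined by Φ((T, 0)) = T, which is a φ-map. If Φ' : E → B(H) is any map satisfying Φ'((T₁, S₁))*Φ'((T₂, S₂)) = T₁*T₂ + S₁*S₂ for all T₁, T₂, S₁, S₂ ∈ K(H) and Φ'((T, 0)) = T for all T ∈ K(H), then Φ'((0, S)) = 0 for all S ∈ K(H). -/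
/-!
Taking `p = (T, 0)` and `q = (0, S)` in the inner-product identity gives
`T* Φ'(0, S) = 0` for every compact `T`. Compact operators separate vectors — the rank-one
operator `|y⟩⟨y|` with `y = Φ'(0, S) u` sends `y` to `‖y‖² y` — so `Φ'(0, S) = 0`.
-/

open ContinuousLinearMap InnerProductSpace

theorem InnerProductSpace.isCompactOperator_rankOne {𝕜 E F : Type*} [RCLike 𝕜]
    [SeminormedAddCommGroup E] [NormedSpace 𝕜 E] [SeminormedAddCommGroup F]
    [InnerProductSpace 𝕜 F] (x : E) (y : F) :
    IsCompactOperator (rankOne 𝕜 x y) :=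
  (isCompactOperator_of_locallyCompactSpace_rng (toSpanSingleton 𝕜 x)).comp_clm (innerSL 𝕜 y)

theorem ContinuousLinearMap.eq_zero_of_forall_isCompactOperator_adjoint_comp_eq_zero
    {𝕜 E F : Type*} [RCLike 𝕜] [SeminormedAddCommGroup E] [NormedSpace 𝕜 E]
    [NormedAddCommGroup F] [InnerProductSpace 𝕜 F] [CompleteSpace F] (x : E →L[𝕜] F)
    (h : ∀ T : F →L[𝕜] F, IsCompactOperator T → adjoint T ∘L x = 0) : x = 0 := by
  ext u
  simpa using congr($(h _ (isCompactOperator_rankOne (x u) (x u))) u)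

/-- **Example: forced vanishing on the second summand.**
Let `E = K(H) ⊕ K(H)` be the Hilbert `K(H)`-module with inner product
`⟪(T₁, S₁), (T₂, S₂)⟫ = T₁* T₂ + S₁* S₂`, and view maps into `B(H)` with the
`B(H)`-valued inner product `⟪T, S⟫ = T* S`.  If `Φ' : E → B(H)` satisfies
`Φ'(T₁,S₁)* Φ'(T₂,S₂) = T₁* T₂ + S₁* S₂` for all compacts and `Φ'(T,0) = T`,
then `Φ'(0,S) = 0` for every compact `S`. -/
theorem phiMap_extension_vanishes_on_second_summand
    {H : Type*} [NormedAddCommGroup H] [InnerProductSpace ℂ H] [CompleteSpace H]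
    (Φ' : {T : H →L[ℂ] H // IsCompactOperator T} ×
          {T : H →L[ℂ] H // IsCompactOperator T} → (H →L[ℂ] H))
    (h1 : ∀ p q : {T : H →L[ℂ] H // IsCompactOperator T} ×
          {T : H →L[ℂ] H // IsCompactOperator T},
      star (Φ' p) * Φ' q = star p.1.val * q.1.val + star p.2.val * q.2.val)
    (h2 : ∀ T : {T : H →L[ℂ] H // IsCompactOperator T},
      Φ' (T, ⟨0, isCompactOperator_zero⟩) = T.val) :
    ∀ S : {T : H →L[ℂ] H // IsCompactOperator T},
      Φ' (⟨0, isCompactOperator_zero⟩, S) = 0 := by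
  intro S
  refine eq_zero_of_forall_isCompactOperator_adjoint_comp_eq_zero _ fun T hT ↦ ?_
  have orthogonal := h1 (⟨T, hT⟩, ⟨0, isCompactOperator_zero⟩) (⟨0, isCompactOperator_zero⟩, S)
  simpa [h2, star_eq_adjoint, mul_def] using orthogonal
end

section
/- Let A be a C*-algebra, E a right Hilbert A-module, F ⊆ E a closed submodule, H₁, H₂ Hilbert spaces, φ : A → B(H₁) a completely positive map, and Φ : F → B(H₁, H₂) a non-degenerate φ-map (i.e., the closed span of Φ(F)H₁ is H₂). If Φ admits an extension to a φ-map Ψ : E → B(H₁, H₂), then Ψ vanishes on F^⊥, i.e., Ψ(z) = 0 for all z ∈ F^⊥. -/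
open scoped ComplexOrder RightActions Matrix

/-- The `B(H₁)`-valued inner product `⟪T, S⟫ = T* S` on `B(H₁, H₂)`. -/
noncomputable def opInner {H₁ H₂ : Type*} [NormedAddCommGroup H₁] [InnerProductSpace ℂ H₁]
    [CompleteSpace H₁] [NormedAddCommGroup H₂] [InnerProductSpace ℂ H₂] [CompleteSpace H₂]
    (T S : H₁ →L[ℂ] H₂) : H₁ →L[ℂ] H₁ :=
  (ContinuousLinearMap.adjoint T).comp S

/-- A matrix over a (C*-)algebra is positive iff it factors as `Nᴴ * N`. -/
def MatIsPos {R : Type*} [NonUnitalSemiring R] [StarRing R] {n : ℕ}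
    (M : Matrix (Fin n) (Fin n) R) : Prop :=
  ∃ N : Matrix (Fin n) (Fin n) R, M = Nᴴ * N

/-- A linear map between C*-algebras is completely positive if all of its matrix
amplifications preserve positivity. -/
def IsCompletelyPositive {A B : Type*} [NonUnitalSemiring A] [StarRing A] [Module ℂ A]
    [NonUnitalSemiring B] [StarRing B] [Module ℂ B] (φ : A →ₗ[ℂ] B) : Prop :=
  ∀ (n : ℕ) (M : Matrix (Fin n) (Fin n) A), MatIsPos M → MatIsPos (M.map φ)

/-- The right Hilbert C⋆-module class as in the older Mathlib (`CStarModule` with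
`[SMul Aᵐᵒᵖ E]`); Mathlib's `CStarModule` now describes left modules. -/
class CStarModuleRight (A E : Type*) [NonUnitalSemiring A] [StarRing A] [Module ℂ A]
    [AddCommGroup E] [Module ℂ E] [PartialOrder A] [SMul Aᵐᵒᵖ E] [Norm A] [Norm E]
    extends Inner A E where
  inner_add_right {x} {y} {z} : inner x (y + z) = inner x y + inner x z
  inner_self_nonneg {x} : 0 ≤ inner x x
  inner_self {x} : inner x x = 0 ↔ x = 0
  inner_op_smul_right {a : A} {x y : E} : inner x (y <• a) = inner x y * a
  inner_smul_right_complex {z : ℂ} {x} {y} : inner x (z • y) = z • inner x y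
  star_inner x y : star (inner x y) = inner y x
  norm_eq_sqrt_norm_inner_self x : ‖x‖ = √‖inner x x‖

/-! Let `z ⊥ F`. For `x ∈ F` the φ-map identity gives `Φ(x)* Ψ(z) = φ(⟨x, z⟩) = 0`, so every
vector `Ψ(z) h'` is orthogonal to all the vectors `Φ(x) h`. These span a dense subspace of `H₂`
by non-degeneracy, hence `Ψ(z) = 0`. -/

section InnerProductSpace

open ContinuousLinearMap

variable {𝕜 : Type*} [RCLike 𝕜]

theorem eq_zero_of_forall_inner_eq_zero_of_dense_span {H : Type*} [NormedAddCommGroup H]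
    [InnerProductSpace 𝕜 H] {s : Set H} (hs : Dense (Submodule.span 𝕜 s : Set H)) {x : H}
    (h : ∀ v ∈ s, inner 𝕜 v x = 0) : x = 0 :=
  hs.eq_zero_of_inner_right 𝕜 fun _ hv =>
    Submodule.mem_orthogonal_singleton_iff_inner_left.mp <|
      Submodule.span_le.mpr (fun u hu => Submodule.mem_orthogonal_singleton_iff_inner_left.mpr
        (h u hu)) hv

theorem ContinuousLinearMap.eq_zero_of_adjoint_comp_eq_zero_of_dense_span {ι K H₁ H₂ : Type*}
    [NormedAddCommGroup K] [InnerProductSpace 𝕜 K]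
    [NormedAddCommGroup H₁] [InnerProductSpace 𝕜 H₁] [CompleteSpace H₁]
    [NormedAddCommGroup H₂] [InnerProductSpace 𝕜 H₂] [CompleteSpace H₂]
    (S : ι → H₁ →L[𝕜] H₂)
    (hS : Dense (Submodule.span 𝕜 {v : H₂ | ∃ (i : ι) (h : H₁), v = S i h} : Set H₂))
    (T : K →L[𝕜] H₂) (hT : ∀ i, adjoint (S i) ∘L T = 0) : T = 0 := by
  ext k
  refine eq_zero_of_forall_inner_eq_zero_of_dense_span hS ?_
  rintro _ ⟨i, h, rfl⟩
  rw [← adjoint_inner_right, ← comp_apply, hT i, zero_apply, inner_zero_right]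

end InnerProductSpace

theorem CStarModuleRight.inner_eq_zero_comm {A E : Type*} [NonUnitalSemiring A] [StarRing A]
    [Module ℂ A] [AddCommGroup E] [Module ℂ E] [PartialOrder A] [SMul Aᵐᵒᵖ E] [Norm A] [Norm E]
    [CStarModuleRight A E] {x y : E} : inner A x y = 0 ↔ inner A y x = 0 := by
  rw [← CStarModuleRight.star_inner y x, star_eq_zero]

theorem phiMap_extension_vanishes_on_orthogonal_complement_general
    {A : Type*} [NonUnitalCStarAlgebra A] [PartialOrder A]
    {E : Type*} [NormedAddCommGroup E] [NormedSpace ℂ E] [SMul Aᵐᵒᵖ E]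
    [CStarModuleRight A E]
    {H₁ H₂ : Type*} [NormedAddCommGroup H₁] [InnerProductSpace ℂ H₁] [CompleteSpace H₁]
    [NormedAddCommGroup H₂] [InnerProductSpace ℂ H₂] [CompleteSpace H₂]
    (F : Submodule ℂ E)
    (φ : A →ₗ[ℂ] (H₁ →L[ℂ] H₁))
    (Φ : F → (H₁ →L[ℂ] H₂))
    (hnd : Dense (↑(Submodule.span ℂ {v : H₂ | ∃ (x : F) (h : H₁), v = Φ x h}) : Set H₂))
    (Ψ : E → (H₁ →L[ℂ] H₂))
    (hext : ∀ x : F, Ψ x = Φ x)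
    (hΨmap : ∀ x y : E, opInner (Ψ x) (Ψ y) = φ (inner A x y : A)) :
    ∀ z : E, (∀ y ∈ F, (inner A z y : A) = 0) → Ψ z = 0 := by
  intro z hz
  refine ContinuousLinearMap.eq_zero_of_adjoint_comp_eq_zero_of_dense_span Φ hnd (Ψ z) fun x => ?_
  change opInner (Φ x) (Ψ z) = 0
  rw [← hext x, hΨmap, CStarModuleRight.inner_eq_zero_comm.mp (hz x x.2), map_zero]

/-- **Lemma (i): a φ-map extension of a non-degenerate φ-map vanishes on `F^⊥`.**
If `Φ : F → B(H₁, H₂)` is a non-degenerate `φ`-map on a closed submodule `F` of a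
Hilbert `A`-module `E` which extends to a `φ`-map `Ψ` on `E`, then `Ψ(z) = 0` for
every `z ∈ F^⊥`. -/
theorem phiMap_extension_vanishes_on_orthogonal_complement
    {A : Type*} [NonUnitalCStarAlgebra A] [PartialOrder A] [StarOrderedRing A]
    {E : Type*} [NormedAddCommGroup E] [NormedSpace ℂ E] [SMul Aᵐᵒᵖ E]
    [CStarModuleRight A E] [CompleteSpace E]
    {H₁ H₂ : Type*} [NormedAddCommGroup H₁] [InnerProductSpace ℂ H₁] [CompleteSpace H₁]
    [NormedAddCommGroup H₂] [InnerProductSpace ℂ H₂] [CompleteSpace H₂]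
    (F : Submodule ℂ E) (hFclosed : IsClosed (F : Set E))
    (hFmod : ∀ (a : A) (x : E), x ∈ F → x <• a ∈ F)
    (φ : A →ₗ[ℂ] (H₁ →L[ℂ] H₁)) (hφ : IsCompletelyPositive φ)
    (Φ : F → (H₁ →L[ℂ] H₂))
    (hΦmap : ∀ x y : F, opInner (Φ x) (Φ y) = φ (inner A (x : E) (y : E) : A))
    (hnd : Dense (↑(Submodule.span ℂ {v : H₂ | ∃ (x : F) (h : H₁), v = Φ x h}) : Set H₂))
    (Ψ : E → (H₁ →L[ℂ] H₂))
    (hext : ∀ x : F, Ψ x = Φ x)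
    (hΨmap : ∀ x y : E, opInner (Ψ x) (Ψ y) = φ (inner A x y : A)) :
    ∀ z : E, (∀ y ∈ F, (inner A z y : A) = 0) → Ψ z = 0 :=
  phiMap_extension_vanishes_on_orthogonal_complement_general F φ Φ hnd Ψ hext hΨmap
end

section
/- Let A be a C*-algebra, E a right Hilbert A-module, F ⊆ E a closed submodule, φ : A → B(H₁) a completely positive map. If there exists a non-degenerate φ-map Φ : F → B(H₁, H₂) admitting a φ-map extension Ψ : E → B(H₁, H₂), then φ(⟨F^⊥, E⟩) = {0}, i.e., φ(⟨z, x⟩) = 0 for every z ∈ F^⊥ and x ∈ E. -/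
open scoped ComplexOrder RightActions Matrix

section OpInner

variable {H₁ H₂ : Type*} [NormedAddCommGroup H₁] [InnerProductSpace ℂ H₁] [CompleteSpace H₁]
  [NormedAddCommGroup H₂] [InnerProductSpace ℂ H₂] [CompleteSpace H₂]

theorem opInner_eq_zero_of_dense_span {ι : Type*} {T : H₁ →L[ℂ] H₂} {S : ι → H₁ →L[ℂ] H₂}
    (hS : Dense (↑(Submodule.span ℂ {v : H₂ | ∃ (i : ι) (h : H₁), v = S i h}) : Set H₂))
    (hT : ∀ i, opInner T (S i) = 0) (R : H₁ →L[ℂ] H₂) : opInner T R = 0 := by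
  have hadj : ContinuousLinearMap.adjoint T = 0 := by
    refine ContinuousLinearMap.ext_on hS ?_
    rintro v ⟨i, h, rfl⟩
    exact congrArg (· h) (hT i)
  simp only [opInner, hadj, ContinuousLinearMap.zero_comp]

end OpInner

theorem phi_vanishes_on_inner_orthogonal_of_extension_general
    {A : Type*} [NonUnitalCStarAlgebra A] [PartialOrder A]
    {E : Type*} [NormedAddCommGroup E] [NormedSpace ℂ E] [SMul Aᵐᵒᵖ E]
    [CStarModuleRight A E]
    {H₁ H₂ : Type*} [NormedAddCommGroup H₁] [InnerProductSpace ℂ H₁] [CompleteSpace H₁]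
    [NormedAddCommGroup H₂] [InnerProductSpace ℂ H₂] [CompleteSpace H₂]
    (F : Submodule ℂ E)
    (φ : A →ₗ[ℂ] (H₁ →L[ℂ] H₁))
    (Φ : F → (H₁ →L[ℂ] H₂))
    (hnd : Dense (↑(Submodule.span ℂ {v : H₂ | ∃ (x : F) (h : H₁), v = Φ x h}) : Set H₂))
    (Ψ : E → (H₁ →L[ℂ] H₂))
    (hext : ∀ x : F, Ψ x = Φ x)
    (hΨmap : ∀ x y : E, opInner (Ψ x) (Ψ y) = φ (inner A x y : A)) :
    ∀ z : E, (∀ y ∈ F, (inner A z y : A) = 0) → ∀ x : E, φ (inner A z x : A) = 0 := by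
  intro z hz x
  have hzF : ∀ y : F, opInner (Ψ z) (Φ y) = 0 := fun y => by
    rw [← hext y, hΨmap, hz y y.2, map_zero]
  rw [← hΨmap]
  exact opInner_eq_zero_of_dense_span hnd hzF (Ψ x)

/-- **Necessary condition for extendability.**
If some non-degenerate `φ`-map `Φ : F → B(H₁, H₂)` admits a `φ`-map extension
`Ψ : E → B(H₁, H₂)`, then `φ(⟪F^⊥, E⟫) = {0}`. -/
theorem phi_vanishes_on_inner_orthogonal_of_extension
    {A : Type*} [NonUnitalCStarAlgebra A] [PartialOrder A] [StarOrderedRing A]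
    {E : Type*} [NormedAddCommGroup E] [NormedSpace ℂ E] [SMul Aᵐᵒᵖ E]
    [CStarModuleRight A E] [CompleteSpace E]
    {H₁ H₂ : Type*} [NormedAddCommGroup H₁] [InnerProductSpace ℂ H₁] [CompleteSpace H₁]
    [NormedAddCommGroup H₂] [InnerProductSpace ℂ H₂] [CompleteSpace H₂]
    (F : Submodule ℂ E) (hFclosed : IsClosed (F : Set E))
    (hFmod : ∀ (a : A) (x : E), x ∈ F → x <• a ∈ F)
    (φ : A →ₗ[ℂ] (H₁ →L[ℂ] H₁)) (hφ : IsCompletelyPositive φ)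
    (Φ : F → (H₁ →L[ℂ] H₂))
    (hΦmap : ∀ x y : F, opInner (Φ x) (Φ y) = φ (inner A (x : E) (y : E) : A))
    (hnd : Dense (↑(Submodule.span ℂ {v : H₂ | ∃ (x : F) (h : H₁), v = Φ x h}) : Set H₂))
    (Ψ : E → (H₁ →L[ℂ] H₂))
    (hext : ∀ x : F, Ψ x = Φ x)
    (hΨmap : ∀ x y : E, opInner (Ψ x) (Ψ y) = φ (inner A x y : A)) :
    ∀ z : E, (∀ y ∈ F, (inner A z y : A) = 0) → ∀ x : E, φ (inner A z x : A) = 0 :=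
  phi_vanishes_on_inner_orthogonal_of_extension_general F φ Φ hnd Ψ hext hΨmap
end

section
/- Let φ : A → B(H₁) be completely positive, F ⊆ E a closed submodule of a right Hilbert A-module, Φ : F → B(H₁, H₂) a non-degenerate φ-map. If Γ₁, Γ₂ : E → B(H₁, H₂) are both φ-maps extending Φ, then Γ₁ = Γ₂; i.e., a non-degenerate operator-valued φ-map has at most one φ-map extension to E. -/
open scoped ComplexOrder RightActions Matrix

/-!
For `y ∈ F` the φ-map identity gives `Φ(y)* Γᵢ(x) = φ(⟨y, x⟩)` for both `i`, so `Γ₁(x) - Γ₂(x)`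
takes values orthogonal to every `Φ(y) h`. By non-degeneracy these vectors span a dense
subspace of `H₂`, hence `Γ₁(x) = Γ₂(x)`.
-/

section OperatorFamily

variable {H₁ H₂ : Type*} [NormedAddCommGroup H₁] [InnerProductSpace ℂ H₁] [CompleteSpace H₁]
    [NormedAddCommGroup H₂] [InnerProductSpace ℂ H₂] [CompleteSpace H₂]
    {ι : Type*} {S : ι → H₁ →L[ℂ] H₂}

theorem eq_zero_of_forall_adjoint_apply_eq_zero
    (hS : Dense (Submodule.span ℂ {v : H₂ | ∃ (i : ι) (h : H₁), v = S i h} : Set H₂))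
    {v : H₂} (hv : ∀ i, ContinuousLinearMap.adjoint (S i) v = 0) : v = 0 := by
  have hspan : Submodule.span ℂ {v : H₂ | ∃ (i : ι) (h : H₁), v = S i h} ≤
      LinearMap.ker (innerₛₗ ℂ v) := by
    rw [Submodule.span_le]
    rintro _ ⟨i, h, rfl⟩
    simp [← ContinuousLinearMap.adjoint_inner_left, hv i]
  exact hS.eq_zero_of_inner_left ℂ fun w hw ↦ hspan hw

theorem ext_of_forall_opInner_eq
    (hS : Dense (Submodule.span ℂ {v : H₂ | ∃ (i : ι) (h : H₁), v = S i h} : Set H₂))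
    {T₁ T₂ : H₁ →L[ℂ] H₂} (h : ∀ i, opInner (S i) T₁ = opInner (S i) T₂) : T₁ = T₂ := by
  ext x
  rw [← sub_eq_zero]
  refine eq_zero_of_forall_adjoint_apply_eq_zero hS fun i ↦ ?_
  rw [map_sub, sub_eq_zero]
  exact congr($(h i) x)

end OperatorFamily

theorem phiMap_extension_unique_general
    {A : Type*} [NonUnitalCStarAlgebra A] [PartialOrder A]
    {E : Type*} [NormedAddCommGroup E] [NormedSpace ℂ E] [SMul Aᵐᵒᵖ E]
    [CStarModuleRight A E]
    {H₁ H₂ : Type*} [NormedAddCommGroup H₁] [InnerProductSpace ℂ H₁] [CompleteSpace H₁]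
    [NormedAddCommGroup H₂] [InnerProductSpace ℂ H₂] [CompleteSpace H₂]
    (F : Submodule ℂ E)
    (φ : A →ₗ[ℂ] (H₁ →L[ℂ] H₁))
    (Φ : F → (H₁ →L[ℂ] H₂))
    (hnd : Dense (↑(Submodule.span ℂ {v : H₂ | ∃ (x : F) (h : H₁), v = Φ x h}) : Set H₂))
    (Γ₁ Γ₂ : E → (H₁ →L[ℂ] H₂))
    (hΓ₁ext : ∀ x : F, Γ₁ x = Φ x)
    (hΓ₁map : ∀ x y : E, opInner (Γ₁ x) (Γ₁ y) = φ (inner A x y))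
    (hΓ₂ext : ∀ x : F, Γ₂ x = Φ x)
    (hΓ₂map : ∀ x y : E, opInner (Γ₂ x) (Γ₂ y) = φ (inner A x y)) :
    Γ₁ = Γ₂ := by
  funext x
  refine ext_of_forall_opInner_eq hnd fun y ↦ ?_
  simpa only [hΓ₁ext, hΓ₂ext] using (hΓ₁map y x).trans (hΓ₂map y x).symm

/-- **Uniqueness of φ-map extensions of non-degenerate φ-maps.**
If `Φ : F → B(H₁, H₂)` is a non-degenerate `φ`-map and `Γ₁, Γ₂ : E → B(H₁, H₂)`
are `φ`-maps both extending `Φ`, then `Γ₁ = Γ₂`. -/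
theorem phiMap_extension_unique
    {A : Type*} [NonUnitalCStarAlgebra A] [PartialOrder A] [StarOrderedRing A]
    {E : Type*} [NormedAddCommGroup E] [NormedSpace ℂ E] [SMul Aᵐᵒᵖ E]
    [CStarModuleRight A E] [CompleteSpace E]
    {H₁ H₂ : Type*} [NormedAddCommGroup H₁] [InnerProductSpace ℂ H₁] [CompleteSpace H₁]
    [NormedAddCommGroup H₂] [InnerProductSpace ℂ H₂] [CompleteSpace H₂]
    (F : Submodule ℂ E) (hFclosed : IsClosed (F : Set E))
    (hFmod : ∀ (a : A) (x : E), x ∈ F → x <• a ∈ F)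
    (φ : A →ₗ[ℂ] (H₁ →L[ℂ] H₁)) (hφ : IsCompletelyPositive φ)
    (Φ : F → (H₁ →L[ℂ] H₂))
    (hΦmap : ∀ x y : F, opInner (Φ x) (Φ y) = φ (inner A (x : E) (y : E)))
    (hnd : Dense (↑(Submodule.span ℂ {v : H₂ | ∃ (x : F) (h : H₁), v = Φ x h}) : Set H₂))
    (Γ₁ Γ₂ : E → (H₁ →L[ℂ] H₂))
    (hΓ₁ext : ∀ x : F, Γ₁ x = Φ x)
    (hΓ₁map : ∀ x y : E, opInner (Γ₁ x) (Γ₁ y) = φ (inner A x y))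
    (hΓ₂ext : ∀ x : F, Γ₂ x = Φ x)
    (hΓ₂map : ∀ x y : E, opInner (Γ₂ x) (Γ₂ y) = φ (inner A x y)) :
    Γ₁ = Γ₂ :=
  phiMap_extension_unique_general F φ Φ hnd Γ₁ Γ₂ hΓ₁ext hΓ₁map hΓ₂ext hΓ₂map
end
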